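/- In the setting of the two reduction orders of R·S·T, prove that e_p = l_p for all 2 ≤ p ≤ n, where E comes from the left-first reduction (S·T = A·B, R·A = C·D, D·B = E·F) and L from the right-first reduction (R·S = G·H, H·T = I·J, G·I = K·L). -/

import Mathlib

/-!
Every row produced by a vector insertion is described through its partial sums by the
recursion `X_{p+1} = min (Z_p, X_p + w_{p+1})`. By induction on `p` one maintains, for the
partial sums of the rows of the two reductions, `C_p = K_p`, `A_p ≤ I_p`,
`G_p + A_p ≤ S_p + C_p` with `A_p = I_p` unless equality holds, and `E_p + K_p = G_p + I_p`;
each induction step is a case analysis of the minima involved. Since the partial sums of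
`G·I = K·L` satisfy `L_p = G_p + I_p - K_p`, the last identity says that `E` and `L` have the
same partial sums, hence the same entries.
-/

open Finset

/-- Partial sum `Φ_p = φ_1 + ⋯ + φ_p` of a multiplicity vector. -/
def PS (f : ℕ → ℕ) (p : ℕ) : ℕ := ∑ i ∈ Finset.Icc 1 p, f i

/-- Partial sums `X_p` of the bumped row in the vector insertion `W·Z = X·Y`:
`X_0 = X_1 = 0`, `X_{p+1} = min(Z_p, X_p + w_{p+1})`. -/
def capX (W Z : ℕ → ℕ) : ℕ → ℕ
  | 0 => 0
  | p + 1 => if p = 0 then 0 else min (PS Z p) (capX W Z p + W (p + 1))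

/-- Component `x_p = X_p - X_{p-1} = min(Z_{p-1} - X_{p-1}, w_p)` (with `x_1 = 0`). -/
def xcomp (W Z : ℕ → ℕ) (p : ℕ) : ℕ := capX W Z p - capX W Z (p - 1)

/-- Component `y_q = w_q + z_q - x_q`. -/
def ycomp (W Z : ℕ → ℕ) (q : ℕ) : ℕ := W q + Z q - xcomp W Z q

/-- `A` from `S·T = A·B`. -/
def rowA (S T : ℕ → ℕ) : ℕ → ℕ := xcomp S T
/-- `B` from `S·T = A·B`. -/
def rowB (S T : ℕ → ℕ) : ℕ → ℕ := ycomp S T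
/-- `C` from `R·A = C·D`. -/
def rowC (R S T : ℕ → ℕ) : ℕ → ℕ := xcomp R (rowA S T)
/-- `D` from `R·A = C·D`. -/
def rowD (R S T : ℕ → ℕ) : ℕ → ℕ := ycomp R (rowA S T)
/-- `E` from `D·B = E·F`. -/
def rowE (R S T : ℕ → ℕ) : ℕ → ℕ := xcomp (rowD R S T) (rowB S T)
/-- `F` from `D·B = E·F`. -/
def rowF (R S T : ℕ → ℕ) : ℕ → ℕ := ycomp (rowD R S T) (rowB S T)
/-- `G` from `R·S = G·H`. -/
def rowG (R S : ℕ → ℕ) : ℕ → ℕ := xcomp R S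
/-- `H` from `R·S = G·H`. -/
def rowH (R S : ℕ → ℕ) : ℕ → ℕ := ycomp R S
/-- `I` from `H·T = I·J`. -/
def rowI (R S T : ℕ → ℕ) : ℕ → ℕ := xcomp (rowH R S) T
/-- `J` from `H·T = I·J`. -/
def rowJ (R S T : ℕ → ℕ) : ℕ → ℕ := ycomp (rowH R S) T
/-- `K` from `G·I = K·L`. -/
def rowK (R S T : ℕ → ℕ) : ℕ → ℕ := xcomp (rowG R S) (rowI R S T)
/-- `L` from `G·I = K·L`. -/
def rowL (R S T : ℕ → ℕ) : ℕ → ℕ := ycomp (rowG R S) (rowI R S T)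

theorem PS_succ (f : ℕ → ℕ) (p : ℕ) : PS f (p + 1) = PS f p + f (p + 1) :=
  Finset.sum_Icc_succ_top (by omega) f

theorem apply_succ_eq_PS_sub (f : ℕ → ℕ) (p : ℕ) : f (p + 1) = PS f (p + 1) - PS f p := by
  rw [PS_succ]
  omega

theorem apply_succ_eq_of_PS_eq {f g : ℕ → ℕ} (h : ∀ p, PS f p = PS g p) (p : ℕ) :
    f (p + 1) = g (p + 1) := by
  rw [apply_succ_eq_PS_sub f, apply_succ_eq_PS_sub g, h, h]

section VectorInsertion

variable (W Z : ℕ → ℕ)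

-- The frozen special case `X_1 = 0` is the instance `p = 0`, since `PS Z 0 = 0`.
theorem capX_succ (p : ℕ) : capX W Z (p + 1) = min (PS Z p) (capX W Z p + W (p + 1)) := by
  cases p <;> simp [capX, PS]

theorem capX_le_PS (p : ℕ) : capX W Z p ≤ PS Z p := by
  cases p with
  | zero => simp [capX, PS]
  | succ p =>
    rw [capX_succ, PS_succ]
    omega

theorem capX_le_capX_succ (p : ℕ) : capX W Z p ≤ capX W Z (p + 1) := by
  have := capX_le_PS W Z p
  rw [capX_succ]
  omega

theorem PS_xcomp : ∀ p, PS (xcomp W Z) p = capX W Z p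
  | 0 => by simp [PS, capX]
  | p + 1 => by
    have := capX_le_capX_succ W Z p
    rw [PS_succ, PS_xcomp p, xcomp, Nat.add_sub_cancel]
    omega

theorem PS_xcomp_succ (p : ℕ) :
    PS (xcomp W Z) (p + 1) = min (PS Z p) (PS (xcomp W Z) p + W (p + 1)) := by
  simp only [PS_xcomp, capX_succ]

theorem PS_xcomp_le (p : ℕ) : PS (xcomp W Z) p ≤ PS Z p :=
  (PS_xcomp W Z p).trans_le (capX_le_PS W Z p)

theorem xcomp_succ (p : ℕ) : xcomp W Z (p + 1) = PS (xcomp W Z) (p + 1) - PS (xcomp W Z) p :=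
  apply_succ_eq_PS_sub _ p

theorem xcomp_succ_le (p : ℕ) : xcomp W Z (p + 1) ≤ W (p + 1) := by
  have := capX_succ W Z p
  rw [xcomp_succ, PS_xcomp, PS_xcomp]
  omega

theorem ycomp_succ (p : ℕ) :
    ycomp W Z (p + 1) = W (p + 1) + Z (p + 1) - (PS (xcomp W Z) (p + 1) - PS (xcomp W Z) p) := by
  rw [ycomp, xcomp_succ]

theorem PS_ycomp_add_PS_xcomp : ∀ p, PS (ycomp W Z) p + PS (xcomp W Z) p = PS W p + PS Z p
  | 0 => by simp [PS]
  | p + 1 => by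
    have := PS_ycomp_add_PS_xcomp p
    have := xcomp_succ_le W Z p
    simp only [PS_succ, ycomp]
    omega

end VectorInsertion

section Step

/- Capital letters are partial sums at `p` (primed: at `p + 1`), `r s` are `R (p + 1)`, `S (p + 1)`,
and `a g h d` are the `(p + 1)`-st entries of the rows `A G H D`. -/
variable {A A' G G' C C' I I' K K' E E' Sp Tp Bp r s a g h d : ℕ}

theorem step_C_eq_K (hG : G' = min Sp (G + r)) (hC : C' = min A (C + r))
    (hK : K' = min I (K + g)) (hg : g = G' - G) (hG_le : G ≤ Sp)
    (hCK : C = K) (hAI : A ≤ I) (hGA : G + A ≤ Sp + C) (hAI' : G + A < Sp + C → A = I) :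
    C' = K' := by
  subst hG hC hK hg
  simp only [Nat.min_def]
  split_ifs <;> omega

theorem step_A_le_I (hA : A' = min Tp (A + s)) (hG : G' = min Sp (G + r))
    (hI : I' = min Tp (I + h)) (hh : h = r + s - (G' - G)) (hAI : A ≤ I) :
    A' ≤ I' := by
  subst hA hG hI hh
  simp only [Nat.min_def]
  split_ifs <;> omega

theorem step_G_add_A_le (hA : A' = min Tp (A + s)) (hG : G' = min Sp (G + r))
    (hC : C' = min A (C + r)) (hGA : G + A ≤ Sp + C) :
    G' + A' ≤ Sp + s + C' := by
  subst hA hG hC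
  simp only [Nat.min_def]
  split_ifs <;> omega

theorem step_A_eq_I_of_lt (hA : A' = min Tp (A + s)) (hG : G' = min Sp (G + r))
    (hC : C' = min A (C + r)) (hI : I' = min Tp (I + h)) (hh : h = r + s - (G' - G))
    (hAI : A ≤ I) (hAI' : G + A < Sp + C → A = I) :
    G' + A' < Sp + s + C' → A' = I' := by
  subst hA hG hC hI hh
  simp only [Nat.min_def]
  split_ifs <;> omega

theorem step_E_add_C (hA : A' = min Tp (A + s)) (hG : G' = min Sp (G + r))
    (hC : C' = min A (C + r)) (hI : I' = min Tp (I + h)) (hh : h = r + s - (G' - G))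
    (hE : E' = min Bp (E + d)) (hd : d = r + a - (C' - C)) (ha : a = A' - A)
    (hB : Bp + A = Sp + Tp) (hC_le : C ≤ A) (hI_le : I ≤ Tp)
    (hAI : A ≤ I) (hGA : G + A ≤ Sp + C) (hAI' : G + A < Sp + C → A = I)
    (hEC : E + C = G + I) :
    E' + C' = G' + I' := by
  obtain rfl : Bp = Sp + Tp - A := by omega
  subst hA hG hC hI hh hE hd ha
  simp only [Nat.min_def]
  split_ifs <;> omega

end Step

structure ReductionInvariant (R S T : ℕ → ℕ) (p : ℕ) : Prop where
  C_eq_K : PS (rowC R S T) p = PS (rowK R S T) p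
  A_le_I : PS (rowA S T) p ≤ PS (rowI R S T) p
  G_add_A_le : PS (rowG R S) p + PS (rowA S T) p ≤ PS S p + PS (rowC R S T) p
  A_eq_I_of_lt : PS (rowG R S) p + PS (rowA S T) p < PS S p + PS (rowC R S T) p →
    PS (rowA S T) p = PS (rowI R S T) p
  E_add_K : PS (rowE R S T) p + PS (rowK R S T) p = PS (rowG R S) p + PS (rowI R S T) p

namespace ReductionInvariant

variable {R S T : ℕ → ℕ} {p : ℕ}

theorem zero : ReductionInvariant R S T 0 := by
  constructor <;> simp [PS]

theorem succ (inv : ReductionInvariant R S T p) : ReductionInvariant R S T (p + 1) := by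
  have hA := PS_xcomp_succ S T p
  have hG := PS_xcomp_succ R S p
  have hC := PS_xcomp_succ R (rowA S T) p
  have hI := PS_xcomp_succ (rowH R S) T p
  have hh := ycomp_succ R S p
  have hK := PS_xcomp_succ (rowG R S) (rowI R S T) p
  have hg := xcomp_succ R S p
  have hE := PS_xcomp_succ (rowD R S T) (rowB S T) p
  have hd := ycomp_succ R (rowA S T) p
  have ha := xcomp_succ S T p
  have hB := PS_ycomp_add_PS_xcomp S T p
  have hG_le := PS_xcomp_le R S p
  have hC_le := PS_xcomp_le R (rowA S T) p
  have hI_le := PS_xcomp_le (rowH R S) T p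
  have hC_eq_K : PS (rowC R S T) (p + 1) = PS (rowK R S T) (p + 1) :=
    step_C_eq_K hG hC hK hg hG_le inv.C_eq_K inv.A_le_I inv.G_add_A_le inv.A_eq_I_of_lt
  have hE_add_C := step_E_add_C hA hG hC hI hh hE hd ha hB hC_le hI_le inv.A_le_I
    inv.G_add_A_le inv.A_eq_I_of_lt (inv.C_eq_K ▸ inv.E_add_K)
  refine ⟨hC_eq_K, step_A_le_I hA hG hI hh inv.A_le_I, ?_, ?_, hC_eq_K ▸ hE_add_C⟩
  · exact PS_succ S p ▸ step_G_add_A_le hA hG hC inv.G_add_A_le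
  · exact PS_succ S p ▸ step_A_eq_I_of_lt hA hG hC hI hh inv.A_le_I inv.A_eq_I_of_lt

end ReductionInvariant

theorem reductionInvariant (R S T : ℕ → ℕ) : ∀ p, ReductionInvariant R S T p
  | 0 => .zero
  | p + 1 => (reductionInvariant R S T p).succ

theorem PS_rowE_eq_PS_rowL (R S T : ℕ → ℕ) (p : ℕ) :
    PS (rowE R S T) p = PS (rowL R S T) p := by
  have hL : PS (rowL R S T) p + PS (rowK R S T) p = PS (rowG R S) p + PS (rowI R S T) p :=
    PS_ycomp_add_PS_xcomp _ _ p
  have hE := (reductionInvariant R S T p).E_add_K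
  omega

/-- The middle rows of the two reductions of `R·S·T` agree:
`e_p = l_p` for all `2 ≤ p ≤ n`. -/
theorem e_eq_l (n : ℕ) (R S T : ℕ → ℕ) :
    ∀ p, 2 ≤ p → p ≤ n → rowE R S T p = rowL R S T p := by
  rintro p hp -
  obtain ⟨q, rfl⟩ := Nat.exists_eq_add_of_le' (by omega : 1 ≤ p)
  exact apply_succ_eq_of_PS_eq (PS_rowE_eq_PS_rowL R S T) q
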